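/- Let Γ be a symmetric positive definite real q×q matrix, Σ₀ a symmetric positive definite real n×n matrix, J a real q×n matrix, and m₀ ∈ ℝⁿ. Let m and η be independent Gaussian random vectors with m ∼ N(m₀, Σ₀) on ℝⁿ and η ∼ N(0, Γ) on ℝ^q, set d = J m + η, and let m̂(d) = m₀ + H⁻¹ Jᵀ Γ⁻¹ (d − J m₀) with H = Jᵀ Γ⁻¹ J + Σ₀⁻¹ be the MAP estimator. Then the expected Bayes risk of the MAP estimator equals the trace of the posterior covariance: E[‖m̂(d) − m‖²] = trace(H⁻¹). -/

import Mathlib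

open MeasureTheory ProbabilityTheory Matrix

section BayesAux

open Real Set
open scoped ENNReal NNReal

private lemma gaussianReal_integral_eq' {μ : ℝ} {v : ℝ≥0} (hv : v ≠ 0) (g : ℝ → ℝ) :
    ∫ x, g x ∂(gaussianReal μ v) = ∫ x, gaussianPDFReal μ v x * g x := by
  rw [gaussianReal_of_var_ne_zero _ hv]
  have h : (volume.withDensity (gaussianPDF μ v))
      = volume.withDensity (fun x => ((Real.toNNReal (gaussianPDFReal μ v x)) : ℝ≥0∞)) := rfl
  rw [h, integral_withDensity_eq_integral_smul
    ((measurable_gaussianPDFReal μ v).real_toNNReal) g]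
  refine integral_congr_ae (ae_of_all _ fun x => ?_)
  simp [NNReal.smul_def, Real.coe_toNNReal _ (gaussianPDFReal_nonneg μ v x)]

private lemma gaussianReal_integrable_iff' {μ : ℝ} {v : ℝ≥0} (hv : v ≠ 0) (g : ℝ → ℝ) :
    Integrable g (gaussianReal μ v) ↔
      Integrable (fun x => gaussianPDFReal μ v x * g x) volume := by
  rw [gaussianReal_of_var_ne_zero _ hv]
  have h : (volume.withDensity (gaussianPDF μ v))
      = volume.withDensity (fun x => ((Real.toNNReal (gaussianPDFReal μ v x)) : ℝ≥0∞)) := rfl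
  rw [h, integrable_withDensity_iff_integrable_smul
    ((measurable_gaussianPDFReal μ v).real_toNNReal)]
  constructor <;> intro hI <;> refine hI.congr (ae_of_all _ fun x => ?_) <;>
    simp [NNReal.smul_def, Real.coe_toNNReal _ (gaussianPDFReal_nonneg μ v x)]

private lemma Gamma_three_halves' : Real.Gamma (3/2) = √π / 2 := by
  have h : (3:ℝ)/2 = 1/2 + 1 := by norm_num
  rw [h, Real.Gamma_add_one (by norm_num), Real.Gamma_one_half_eq]
  ring

private lemma integral_sq_exp' {b : ℝ} (hb : 0 < b) :
    ∫ x : ℝ, x ^ 2 * Real.exp (-b * x ^ 2) = b ^ (-(3:ℝ)/2) * (√π / 2) := by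
  have h1 : ∫ x : ℝ, x ^ 2 * Real.exp (-b * x ^ 2)
      = ∫ x : ℝ, |x| ^ 2 * Real.exp (-b * |x| ^ 2) := by
    simp [sq_abs]
  rw [h1, integral_comp_abs (f := fun x => x ^ 2 * Real.exp (-b * x ^ 2))]
  have h2 : ∫ x in Ioi (0:ℝ), x ^ 2 * Real.exp (-b * x ^ 2)
      = ∫ x in Ioi (0:ℝ), x ^ (2:ℝ) * Real.exp (-b * x ^ (2:ℝ)) := by
    refine setIntegral_congr_fun measurableSet_Ioi (fun x hx => ?_)
    rw [show (2:ℝ) = ((2:ℕ):ℝ) by norm_num, Real.rpow_natCast]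
  rw [h2, integral_rpow_mul_exp_neg_mul_rpow (by norm_num) (by norm_num) hb]
  rw [show (-((2:ℝ) + 1) / 2) = -(3:ℝ)/2 by norm_num, show (((2:ℝ) + 1) / 2) = (3:ℝ)/2 by norm_num,
    Gamma_three_halves']
  ring

private lemma pdf_sq_eq' (v : ℝ≥0) :
    (fun x : ℝ => gaussianPDFReal 0 v x * x ^ 2)
      = fun x : ℝ => (√(2 * π * (v:ℝ)))⁻¹ * (x ^ 2 * Real.exp (-(2 * (v:ℝ))⁻¹ * x ^ 2)) := by
  funext x
  rw [gaussianPDFReal]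
  rw [show -(x - 0) ^ 2 / (2 * (v:ℝ)) = -(2 * (v:ℝ))⁻¹ * x ^ 2 by ring]
  ring

private lemma pdf_id_eq' (v : ℝ≥0) :
    (fun x : ℝ => gaussianPDFReal 0 v x * x)
      = fun x : ℝ => (√(2 * π * (v:ℝ)))⁻¹ * (x * Real.exp (-(2 * (v:ℝ))⁻¹ * x ^ 2)) := by
  funext x
  rw [gaussianPDFReal]
  rw [show -(x - 0) ^ 2 / (2 * (v:ℝ)) = -(2 * (v:ℝ))⁻¹ * x ^ 2 by ring]
  ring

private lemma gaussian_sq_integrable' (v : ℝ≥0) :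
    Integrable (fun x : ℝ => x ^ 2) (gaussianReal 0 v) := by
  by_cases hv : v = 0
  · subst hv
    rw [gaussianReal_zero_var]
    refine ⟨(measurable_id.pow_const 2).aestronglyMeasurable, ?_⟩
    rw [HasFiniteIntegral, lintegral_dirac]
    exact ENNReal.coe_lt_top
  · rw [gaussianReal_integrable_iff' hv, pdf_sq_eq' v]
    have hw : 0 < (v:ℝ) := by positivity
    refine Integrable.const_mul ?_ _
    have := integrable_rpow_mul_exp_neg_mul_sq (b := (2 * (v:ℝ))⁻¹) (by positivity)
      (s := 2) (by norm_num)
    refine this.congr (ae_of_all _ fun x => ?_)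
    have : x ^ (2:ℝ) = x ^ (2:ℕ) := by
      rw [← Real.rpow_natCast x 2]; norm_num
    simp only [this]

private lemma gaussian_sq_moment' (v : ℝ≥0) :
    ∫ x, x ^ 2 ∂(gaussianReal 0 v) = (v:ℝ) := by
  by_cases hv : v = 0
  · subst hv; rw [gaussianReal_zero_var, integral_dirac]; norm_num
  · rw [gaussianReal_integral_eq' hv, pdf_sq_eq' v, integral_const_mul,
      integral_sq_exp' (by positivity)]
    have hw : 0 < (v:ℝ) := by positivity
    set s := √(2 * (v:ℝ)) with hs_def
    have hs : 0 < s := Real.sqrt_pos.mpr (by positivity)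
    have hs2 : s ^ 2 = 2 * (v:ℝ) := Real.sq_sqrt (by positivity)
    have h1 : (2 * (v:ℝ))⁻¹ = s ^ (-2:ℝ) := by
      rw [Real.rpow_neg hs.le]
      congr 1
      rw [← hs2, ← Real.rpow_natCast s 2]; norm_num
    have h2 : ((2 * (v:ℝ))⁻¹) ^ (-(3:ℝ)/2) = s ^ 3 := by
      rw [h1, ← Real.rpow_natCast s 3, ← Real.rpow_mul hs.le]
      norm_num
    have h3 : √(2 * π * (v:ℝ)) = √π * s := by
      rw [show 2 * π * (v:ℝ) = π * (2 * (v:ℝ)) by ring, Real.sqrt_mul pi_pos.le]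
    rw [h2, h3]
    have hπ : (0:ℝ) < √π := Real.sqrt_pos.mpr pi_pos
    field_simp
    linear_combination hs2

private lemma gaussian_id_integrable' (v : ℝ≥0) :
    Integrable (fun x : ℝ => x) (gaussianReal 0 v) := by
  by_cases hv : v = 0
  · subst hv
    rw [gaussianReal_zero_var]
    refine ⟨measurable_id.aestronglyMeasurable, ?_⟩
    rw [HasFiniteIntegral, lintegral_dirac]
    exact ENNReal.coe_lt_top
  · rw [gaussianReal_integrable_iff' hv, pdf_id_eq' v]
    have hw : 0 < (v:ℝ) := by positivity
    exact (integrable_mul_exp_neg_mul_sq (by positivity)).const_mul _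

private lemma gaussian_id_moment' (v : ℝ≥0) :
    ∫ x, x ∂(gaussianReal 0 v) = 0 := by
  by_cases hv : v = 0
  · subst hv; rw [gaussianReal_zero_var, integral_dirac]
  · rw [gaussianReal_integral_eq' hv, pdf_id_eq' v, integral_const_mul]
    have h : ∫ x : ℝ, x * Real.exp (-(2 * (v:ℝ))⁻¹ * x ^ 2) = 0 := by
      have key := integral_neg_eq_self
        (fun x : ℝ => x * Real.exp (-(2 * (v:ℝ))⁻¹ * x ^ 2)) (volume : Measure ℝ)
      have e : (fun x : ℝ => (-x) * Real.exp (-(2 * (v:ℝ))⁻¹ * (-x) ^ 2))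
          = fun x : ℝ => -(x * Real.exp (-(2 * (v:ℝ))⁻¹ * x ^ 2)) := by
        funext x; rw [neg_sq]; ring
      rw [e, integral_neg] at key
      linarith
    rw [h, mul_zero]

private lemma second_moment_indep_sum' {Ω : Type*} [MeasurableSpace Ω] (P : Measure Ω)
    [IsProbabilityMeasure P]
    {U V : Ω → ℝ} (hU : Measurable U) (hV : Measurable V)
    {a b : ℝ≥0} (hUlaw : Measure.map U P = gaussianReal 0 a)
    (hVlaw : Measure.map V P = gaussianReal 0 b)
    (hUV : IndepFun U V P) :
    Integrable (fun ω => (U ω + V ω) ^ 2) P ∧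
      ∫ ω, (U ω + V ω) ^ 2 ∂P = (a:ℝ) + (b:ℝ) := by
  have hsq : ∀ v : ℝ≥0, AEStronglyMeasurable (fun x : ℝ => x ^ 2) (gaussianReal 0 v) :=
    fun v => (measurable_id.pow_const 2).aestronglyMeasurable
  have hid : ∀ v : ℝ≥0, AEStronglyMeasurable (fun x : ℝ => x) (gaussianReal 0 v) :=
    fun v => measurable_id.aestronglyMeasurable
  have hU2 : Integrable (fun ω => U ω ^ 2) P := by
    have := (integrable_map_measure (hUlaw ▸ hsq a) hU.aemeasurable).mp
      (hUlaw ▸ gaussian_sq_integrable' a)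
    exact this
  have hV2 : Integrable (fun ω => V ω ^ 2) P := by
    exact (integrable_map_measure (hVlaw ▸ hsq b) hV.aemeasurable).mp
      (hVlaw ▸ gaussian_sq_integrable' b)
  have hU1 : Integrable U P := by
    have := (integrable_map_measure (g := fun x : ℝ => x) (hUlaw ▸ hid a)
      hU.aemeasurable).mp (hUlaw ▸ gaussian_id_integrable' a)
    exact this
  have hV1 : Integrable V P := by
    have := (integrable_map_measure (g := fun x : ℝ => x) (hVlaw ▸ hid b)
      hV.aemeasurable).mp (hVlaw ▸ gaussian_id_integrable' b)
    exact this
  have hmul : Integrable (fun ω => U ω * V ω) P := hUV.integrable_mul hU1 hV1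
  have hIU2 : ∫ ω, U ω ^ 2 ∂P = (a:ℝ) := by
    have := integral_map (f := fun x : ℝ => x ^ 2) hU.aemeasurable (hUlaw ▸ hsq a)
    rw [hUlaw, gaussian_sq_moment'] at this
    exact this.symm
  have hIV2 : ∫ ω, V ω ^ 2 ∂P = (b:ℝ) := by
    have := integral_map (f := fun x : ℝ => x ^ 2) hV.aemeasurable (hVlaw ▸ hsq b)
    rw [hVlaw, gaussian_sq_moment'] at this
    exact this.symm
  have hIU1 : ∫ ω, U ω ∂P = 0 := by
    have := integral_map (f := fun x : ℝ => x) hU.aemeasurable (hUlaw ▸ hid a)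
    rw [hUlaw, gaussian_id_moment'] at this
    exact this.symm
  have hIV1 : ∫ ω, V ω ∂P = 0 := by
    have := integral_map (f := fun x : ℝ => x) hV.aemeasurable (hVlaw ▸ hid b)
    rw [hVlaw, gaussian_id_moment'] at this
    exact this.symm
  have hImul : ∫ ω, U ω * V ω ∂P = 0 := by
    have := hUV.integral_fun_mul_eq_mul_integral hU.aestronglyMeasurable hV.aestronglyMeasurable
    rw [hIU1] at this
    simpa using this
  have hexp : (fun ω => (U ω + V ω) ^ 2)
      = fun ω => U ω ^ 2 + (2 * (U ω * V ω) + V ω ^ 2) := by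
    funext ω; ring
  constructor
  · rw [hexp]
    exact hU2.add ((hmul.const_mul 2).add hV2)
  · have hg : Integrable (fun ω => 2 * (U ω * V ω) + V ω ^ 2) P :=
      (hmul.const_mul 2).add hV2
    rw [hexp, integral_add hU2 hg, integral_add (hmul.const_mul 2) hV2,
      integral_const_mul, hIU2, hIV2, hImul]
    ring

private lemma matrix_key' {q n : ℕ} (Γ : Matrix (Fin q) (Fin q) ℝ) (hΓ : Γ.PosDef)
    (S₀ : Matrix (Fin n) (Fin n) ℝ) (hS₀ : S₀.PosDef) (J : Matrix (Fin q) (Fin n) ℝ) :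
    ((Jᵀ * Γ⁻¹ * J + S₀⁻¹)⁻¹ * (Jᵀ * Γ⁻¹) * J - 1) * S₀
        * ((Jᵀ * Γ⁻¹ * J + S₀⁻¹)⁻¹ * (Jᵀ * Γ⁻¹) * J - 1)ᵀ
      + ((Jᵀ * Γ⁻¹ * J + S₀⁻¹)⁻¹ * (Jᵀ * Γ⁻¹)) * Γ
        * ((Jᵀ * Γ⁻¹ * J + S₀⁻¹)⁻¹ * (Jᵀ * Γ⁻¹))ᵀ
      = (Jᵀ * Γ⁻¹ * J + S₀⁻¹)⁻¹ := by
  have hΓi : Γ⁻¹.PosDef := hΓ.inv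
  have hS₀i : S₀⁻¹.PosDef := hS₀.inv
  have hJps : (Jᵀ * Γ⁻¹ * J).PosSemidef := by
    have := hΓi.posSemidef.conjTranspose_mul_mul_same J
    rwa [conjTranspose_eq_transpose_of_trivial] at this
  have hH : (Jᵀ * Γ⁻¹ * J + S₀⁻¹).PosDef := Matrix.PosDef.posSemidef_add hJps hS₀i
  set H := Jᵀ * Γ⁻¹ * J + S₀⁻¹ with hHdef
  have hH1 : H⁻¹ * H = 1 :=
    Matrix.nonsing_inv_mul _ ((Matrix.isUnit_iff_isUnit_det _).mp hH.isUnit)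
  have hH2 : H * H⁻¹ = 1 :=
    Matrix.mul_nonsing_inv _ ((Matrix.isUnit_iff_isUnit_det _).mp hH.isUnit)
  have hS1 : S₀⁻¹ * S₀ = 1 :=
    Matrix.nonsing_inv_mul _ ((Matrix.isUnit_iff_isUnit_det _).mp hS₀.isUnit)
  have hG2 : Γ * Γ⁻¹ = 1 :=
    Matrix.mul_nonsing_inv _ ((Matrix.isUnit_iff_isUnit_det _).mp hΓ.isUnit)
  have hHt : (H⁻¹)ᵀ = H⁻¹ := by
    have h := hH.inv.isHermitian
    rwa [IsHermitian, conjTranspose_eq_transpose_of_trivial] at h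
  have hSt : (S₀⁻¹)ᵀ = S₀⁻¹ := by
    have h := hS₀i.isHermitian
    rwa [IsHermitian, conjTranspose_eq_transpose_of_trivial] at h
  have hGt : (Γ⁻¹)ᵀ = Γ⁻¹ := by
    have h := hΓi.isHermitian
    rwa [IsHermitian, conjTranspose_eq_transpose_of_trivial] at h
  have hC : H⁻¹ * (Jᵀ * Γ⁻¹) * J - 1 = -(H⁻¹ * S₀⁻¹) := by
    calc H⁻¹ * (Jᵀ * Γ⁻¹) * J - 1
        = H⁻¹ * (Jᵀ * Γ⁻¹ * J) - H⁻¹ * H := by rw [hH1, Matrix.mul_assoc]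
      _ = H⁻¹ * (Jᵀ * Γ⁻¹ * J - H) := by rw [Matrix.mul_sub]
      _ = -(H⁻¹ * S₀⁻¹) := by
          rw [hHdef, show Jᵀ * Γ⁻¹ * J - (Jᵀ * Γ⁻¹ * J + S₀⁻¹) = -(S₀⁻¹) by abel,
            Matrix.mul_neg]
  have hCt : (-(H⁻¹ * S₀⁻¹))ᵀ = -(S₀⁻¹ * H⁻¹) := by
    rw [transpose_neg, transpose_mul, hHt, hSt]
  have hAt : (H⁻¹ * (Jᵀ * Γ⁻¹))ᵀ = Γ⁻¹ * J * H⁻¹ := by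
    rw [transpose_mul, transpose_mul, hHt, hGt, transpose_transpose, Matrix.mul_assoc]
  rw [hC, hCt, hAt]
  have t1 : -(H⁻¹ * S₀⁻¹) * S₀ * -(S₀⁻¹ * H⁻¹) = H⁻¹ * (S₀⁻¹ * H⁻¹) := by
    rw [Matrix.neg_mul, Matrix.neg_mul, Matrix.mul_neg, neg_neg,
      Matrix.mul_assoc H⁻¹ S₀⁻¹ S₀, hS1, Matrix.mul_one]
  have t2 : H⁻¹ * (Jᵀ * Γ⁻¹) * Γ * (Γ⁻¹ * J * H⁻¹)
      = H⁻¹ * (Jᵀ * Γ⁻¹ * J * H⁻¹) := by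
    simp only [Matrix.mul_assoc]
    rw [show Γ * (Γ⁻¹ * (J * H⁻¹)) = J * H⁻¹ by rw [← Matrix.mul_assoc, hG2, Matrix.one_mul]]
  rw [t1, t2, ← Matrix.mul_add, ← Matrix.add_mul]
  rw [show S₀⁻¹ + Jᵀ * Γ⁻¹ * J = H by rw [hHdef]; abel, hH2, Matrix.mul_one]

private lemma quad_diag' {k l : ℕ} (B : Matrix (Fin k) (Fin l) ℝ)
    (M : Matrix (Fin l) (Fin l) ℝ) (i : Fin k) :
    B i ⬝ᵥ M.mulVec (B i) = (B * M * Bᵀ) i i := by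
  simp only [Matrix.mul_apply, Matrix.mulVec, dotProduct, transpose_apply,
    Finset.sum_mul, Finset.mul_sum]
  rw [Finset.sum_comm]
  exact Finset.sum_congr rfl fun x _ => Finset.sum_congr rfl fun y _ => by ring

private lemma measurable_dotProduct_comp {Ω : Type*} [MeasurableSpace Ω] {k : ℕ}
    (u : Fin k → ℝ) {X : Ω → Fin k → ℝ} (hX : Measurable X) :
    Measurable fun ω => u ⬝ᵥ X ω := by
  simp only [dotProduct]
  exact Finset.measurable_sum _ fun j _ =>
    ((measurable_pi_apply j).comp hX).const_mul (u j)

private lemma measurable_dotProduct {k : ℕ} (u : Fin k → ℝ) :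
    Measurable fun x : Fin k → ℝ => u ⬝ᵥ x :=
  measurable_dotProduct_comp u measurable_id

end BayesAux

/-- A random vector `X` in `ℝⁿ` is Gaussian with mean `m` and covariance matrix `S`
(law `N(m, S)`) if every linear functional `a ⬝ᵥ X` is a real Gaussian with mean `a ⬝ᵥ m`
and variance `aᵀ S a` (Cramér–Wold characterization). -/
def IsGaussianVec {Ω : Type*} [MeasurableSpace Ω] (P : Measure Ω) {n : ℕ}
    (X : Ω → Fin n → ℝ) (m : Fin n → ℝ) (S : Matrix (Fin n) (Fin n) ℝ) : Prop :=
  ∀ a : Fin n → ℝ,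
    Measure.map (fun ω => a ⬝ᵥ X ω) P
      = gaussianReal (a ⬝ᵥ m) (Real.toNNReal (a ⬝ᵥ S.mulVec a))

/-- In the linear Gaussian inverse problem `d = J m + η` with
independent `m ∼ N(m₀, S₀)` and `η ∼ N(0, Γ)` (`Γ`, `S₀` symmetric positive definite),
the expected Bayes risk of the MAP estimator
`m̂(d) = m₀ + H⁻¹ Jᵀ Γ⁻¹ (d − J m₀)`, `H = Jᵀ Γ⁻¹ J + S₀⁻¹`, equals the trace of the
posterior covariance: `E[‖m̂(d) − m‖²] = trace (H⁻¹)`. -/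
theorem bayes_risk_eq_trace_posterior_covariance
    {Ω : Type*} [MeasurableSpace Ω] (P : Measure Ω) [IsProbabilityMeasure P]
    {q n : ℕ} (Γ : Matrix (Fin q) (Fin q) ℝ) (hΓ : Γ.PosDef)
    (S₀ : Matrix (Fin n) (Fin n) ℝ) (hS₀ : S₀.PosDef)
    (J : Matrix (Fin q) (Fin n) ℝ) (m₀ : Fin n → ℝ)
    (m : Ω → Fin n → ℝ) (η : Ω → Fin q → ℝ)
    (hmmeas : Measurable m) (hηmeas : Measurable η)
    (hm : IsGaussianVec P m m₀ S₀) (hη : IsGaussianVec P η 0 Γ)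
    (hindep : IndepFun m η P) :
    ∫ ω, ‖(show EuclideanSpace ℝ (Fin n) from WithLp.toLp 2 (
          (m₀ + (Jᵀ * Γ⁻¹ * J + S₀⁻¹)⁻¹.mulVec
              ((Jᵀ * Γ⁻¹).mulVec ((J.mulVec (m ω) + η ω) - J.mulVec m₀)))
            - m ω))‖ ^ 2 ∂P
      = (Jᵀ * Γ⁻¹ * J + S₀⁻¹)⁻¹.trace := by
  classical
  set H := Jᵀ * Γ⁻¹ * J + S₀⁻¹ with hHdef
  set A := H⁻¹ * (Jᵀ * Γ⁻¹) with hAdef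
  set C := A * J - 1 with hCdef
  -- pointwise identity for the error vector
  have hYvec : ∀ ω, (m₀ + H⁻¹.mulVec ((Jᵀ * Γ⁻¹).mulVec ((J.mulVec (m ω) + η ω)
        - J.mulVec m₀))) - m ω
      = C.mulVec (m ω - m₀) + A.mulVec (η ω) := by
    intro ω
    rw [hCdef, hAdef]
    simp only [Matrix.sub_mulVec, Matrix.mulVec_add, Matrix.mulVec_sub,
      Matrix.mulVec_mulVec, Matrix.one_mulVec, Matrix.mul_assoc]
    abel
  -- per-coordinate statistics
  have coordFact : ∀ i : Fin n,
      Integrable (fun ω => ((C.mulVec (m ω - m₀) + A.mulVec (η ω)) i) ^ 2) P ∧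
      ∫ ω, ((C.mulVec (m ω - m₀) + A.mulVec (η ω)) i) ^ 2 ∂P
        = (C * S₀ * Cᵀ) i i + (A * Γ * Aᵀ) i i := by
    intro i
    set u : Fin n → ℝ := C i with hu
    set v : Fin q → ℝ := A i with hv
    have hUmeas : Measurable fun ω => u ⬝ᵥ m ω + (-(u ⬝ᵥ m₀)) :=
      (measurable_dotProduct_comp u hmmeas).add_const _
    have hVmeas : Measurable fun ω => v ⬝ᵥ η ω :=
      measurable_dotProduct_comp v hηmeas
    -- laws
    have hUlaw : Measure.map (fun ω => u ⬝ᵥ m ω + (-(u ⬝ᵥ m₀))) P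
        = gaussianReal 0 (Real.toNNReal (u ⬝ᵥ S₀.mulVec u)) := by
      have h1 : Measure.map (fun ω => u ⬝ᵥ m ω + (-(u ⬝ᵥ m₀))) P
          = Measure.map (· + (-(u ⬝ᵥ m₀))) (Measure.map (fun ω => u ⬝ᵥ m ω) P) := by
        rw [Measure.map_map (measurable_id'.add_const _)
          (measurable_dotProduct_comp u hmmeas)]
        rfl
      rw [h1, hm u, gaussianReal_map_add_const, add_neg_cancel]
    have hVlaw : Measure.map (fun ω => v ⬝ᵥ η ω) P
        = gaussianReal 0 (Real.toNNReal (v ⬝ᵥ Γ.mulVec v)) := by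
      rw [hη v]
      norm_num
    -- independence
    have hUV : IndepFun (fun ω => u ⬝ᵥ m ω + (-(u ⬝ᵥ m₀))) (fun ω => v ⬝ᵥ η ω) P :=
      hindep.comp ((measurable_dotProduct u).add_const _) (measurable_dotProduct v)
    have key := second_moment_indep_sum' P hUmeas hVmeas hUlaw hVlaw hUV
    have hptwise : ∀ ω, (C.mulVec (m ω - m₀) + A.mulVec (η ω)) i
        = (u ⬝ᵥ m ω + (-(u ⬝ᵥ m₀))) + v ⬝ᵥ η ω := by
      intro ω
      simp only [Pi.add_apply]
      have e1 : (C.mulVec (m ω - m₀)) i = u ⬝ᵥ (m ω - m₀) := rfl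
      have e2 : (A.mulVec (η ω)) i = v ⬝ᵥ η ω := rfl
      rw [e1, e2, dotProduct_sub]
      ring
    have hS₀nn : 0 ≤ u ⬝ᵥ S₀.mulVec u := by
      have := hS₀.posSemidef.dotProduct_mulVec_nonneg u
      simpa using this
    have hΓnn : 0 ≤ v ⬝ᵥ Γ.mulVec v := by
      have := hΓ.posSemidef.dotProduct_mulVec_nonneg v
      simpa using this
    constructor
    · refine key.1.congr (ae_of_all _ fun ω => ?_)
      exact congrArg (· ^ 2) (hptwise ω).symm
    · have h2 : ∫ ω, ((C.mulVec (m ω - m₀) + A.mulVec (η ω)) i) ^ 2 ∂P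
          = ∫ ω, ((u ⬝ᵥ m ω + (-(u ⬝ᵥ m₀))) + v ⬝ᵥ η ω) ^ 2 ∂P := by
        refine integral_congr_ae (ae_of_all _ fun ω => ?_)
        exact congrArg (· ^ 2) (hptwise ω)
      rw [h2, key.2, Real.coe_toNNReal _ hS₀nn, Real.coe_toNNReal _ hΓnn,
        quad_diag' C S₀ i, quad_diag' A Γ i]
  -- norm squared as sum of squares
  have hnorm : ∀ ω, ‖(show EuclideanSpace ℝ (Fin n) from WithLp.toLp 2 (
          (m₀ + H⁻¹.mulVec ((Jᵀ * Γ⁻¹).mulVec ((J.mulVec (m ω) + η ω) - J.mulVec m₀)))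
            - m ω))‖ ^ 2
      = ∑ i, ((C.mulVec (m ω - m₀) + A.mulVec (η ω)) i) ^ 2 := by
    intro ω
    rw [EuclideanSpace.norm_eq, Real.sq_sqrt (by positivity)]
    rw [show ((show EuclideanSpace ℝ (Fin n) from WithLp.toLp 2 (
          (m₀ + H⁻¹.mulVec ((Jᵀ * Γ⁻¹).mulVec ((J.mulVec (m ω) + η ω) - J.mulVec m₀)))
            - m ω))) = WithLp.toLp 2 (C.mulVec (m ω - m₀) + A.mulVec (η ω)) from
        congrArg (WithLp.toLp 2) (hYvec ω)]
    refine Finset.sum_congr rfl fun i _ => ?_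
    rw [Real.norm_eq_abs, sq_abs, PiLp.toLp_apply]
  calc ∫ ω, ‖(show EuclideanSpace ℝ (Fin n) from WithLp.toLp 2 (
          (m₀ + H⁻¹.mulVec ((Jᵀ * Γ⁻¹).mulVec ((J.mulVec (m ω) + η ω) - J.mulVec m₀)))
            - m ω))‖ ^ 2 ∂P
      = ∫ ω, ∑ i, ((C.mulVec (m ω - m₀) + A.mulVec (η ω)) i) ^ 2 ∂P := by
        refine integral_congr_ae (ae_of_all _ fun ω => ?_)
        exact hnorm ω
    _ = ∑ i, ∫ ω, ((C.mulVec (m ω - m₀) + A.mulVec (η ω)) i) ^ 2 ∂P :=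
        integral_finset_sum _ fun i _ => (coordFact i).1
    _ = ∑ i, ((C * S₀ * Cᵀ) i i + (A * Γ * Aᵀ) i i) :=
        Finset.sum_congr rfl fun i _ => (coordFact i).2
    _ = (C * S₀ * Cᵀ + A * Γ * Aᵀ).trace := by
        rw [Matrix.trace]
        refine (Finset.sum_congr rfl fun i _ => ?_).symm
        simp [Matrix.diag]
    _ = H⁻¹.trace := by
        rw [hCdef, hAdef, hHdef]
        rw [matrix_key' Γ hΓ S₀ hS₀ J]
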